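/- Let ({θ_i}_{i=0}^d; {θ*_i}_{i=0}^d; {φ_i}_{i=1}^d; {ϕ_i}_{i=1}^d) be a parameter array of diameter d ≥ 1 over a field K. The following are equivalent: (i) there exist scalars ξ, ζ, ξ*, ζ* in K with ξ, ξ* nonzero such that θ_{d−i} = ξθ_i + ζ and θ*_{d−i} = ξ*θ*_i + ζ* for 0 ≤ i ≤ d, and φ_{d−i+1} = ξξ*φ_i and ϕ_{d−i+1} = ξξ*ϕ_i for 1 ≤ i ≤ d (i.e., the relative P^↓⇓ is affine isomorphic to P); (ii) φ_1 = φ_d and ϕ_1 = ϕ_d; (iii) φ_i = φ_{d−i+1} and ϕ_i = ϕ_{d−i+1} for 1 ≤ i ≤ d; (iv) each of (θ*_i − θ*_0)(θ_i − θ_0)^{−1} and (θ*_{d−i} − θ*_d)(θ_i − θ_0)^{−1} is independent of i for 1 ≤ i ≤ d. Moreover, if (i)–(iv) hold, then each of θ_i + θ_{d−i} and θ*_i + θ*_{d−i} is independent of i for 0 ≤ i ≤ d, and (i) is satisfied with ξ = −1, ξ* = −1, ζ equal to the common value of θ_i + θ_{d−i}, and ζ* equal to the common value of θ*_i + θ*_{d−i}.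 -/

import Mathlib

/-!
Write `Δ_j = θ_{j+1} - θ_j`. By (PA5) both `Δ` and `Δ*` satisfy a three-term recurrence
`x_{j+2} = β x_{j+1} - x_j` with a common `β`, so a solution is determined by its first two
terms, hence also by its first term and its total sum once `∑_{j<d} U_j(β, 1) ≠ 0`; comparing a
solution with its reversal shows that this sum can only vanish if `θ_{d-1} = θ_0` or `θ_d = θ_0`.
Comparing (PA3) and (PA4) at `i = 1` and `i = d`, the condition `φ_1 = φ_d, ϕ_1 = ϕ_d` amounts to
`Δ_0 = Δ_{d-1}` together with `Δ*_0 (θ_d - θ_0) = Δ_0 (θ*_d - θ*_0)`. The first makes `Δ` agree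
with its reversal, i.e. `θ_i + θ_{d-i} = θ_0 + θ_d`; the second makes `Δ_0 Δ*` agree with
`Δ*_0 Δ`, i.e. `θ*` is an affine image of `θ`. The rest is substitution into (PA3) and (PA4).
-/

/-- A parameter array of diameter `d` over a field `K`:
conditions (PA1)–(PA5) of Terwilliger's classification of Leonard systems. -/
def IsParamArray (K : Type*) [Field K] (d : ℕ) (θ θs φ ϕ : ℕ → K) : Prop :=
  -- (PA1)
  (∀ i, 1 ≤ i → i ≤ d → φ i ≠ 0 ∧ ϕ i ≠ 0) ∧
  -- (PA2)
  (∀ i j, i ≤ d → j ≤ d → i ≠ j → θ i ≠ θ j ∧ θs i ≠ θs j) ∧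
  -- (PA3)
  (∀ i, 1 ≤ i → i ≤ d →
    φ i = ϕ 1 * (∑ h ∈ Finset.range i, (θ h - θ (d - h)) / (θ 0 - θ d))
      + (θs i - θs 0) * (θ (i - 1) - θ d)) ∧
  -- (PA4)
  (∀ i, 1 ≤ i → i ≤ d →
    ϕ i = φ 1 * (∑ h ∈ Finset.range i, (θ h - θ (d - h)) / (θ 0 - θ d))
      + (θs i - θs 0) * (θ (d - i + 1) - θ 0)) ∧
  -- (PA5)
  (∀ i j, 2 ≤ i → i ≤ d - 1 → 2 ≤ j → j ≤ d - 1 →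
    (θ (i - 2) - θ (i + 1)) / (θ (i - 1) - θ i)
      = (θs (i - 2) - θs (i + 1)) / (θs (i - 1) - θs i) ∧
    (θ (i - 2) - θ (i + 1)) / (θ (i - 1) - θ i)
      = (θ (j - 2) - θ (j + 1)) / (θ (j - 1) - θ j))

open Finset

section LinRec

variable {R : Type*} [CommRing R]

/-- The Lucas sequence `U_{n-1}(β, 1)`, shifted by one so that `U_{-1} = -1` has an index. -/
def lucasSeq (β : R) : ℕ → R
  | 0 => -1
  | 1 => 0
  | n + 2 => β * lucasSeq β (n + 1) - lucasSeq β n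

def LinRec (β : R) (n : ℕ) (x : ℕ → R) : Prop :=
  ∀ j, j + 2 < n → x (j + 2) = β * x (j + 1) - x j

variable {β : R} {n : ℕ} {x y : ℕ → R}

theorem linRec_lucasSeq_succ (β : R) (n : ℕ) : LinRec β n (fun j => lucasSeq β (j + 1)) :=
  fun _ _ => rfl

theorem LinRec.const_mul (hx : LinRec β n x) (c : R) : LinRec β n (fun j => c * x j) := by
  intro j hj
  simp only [hx j hj]
  ring

theorem LinRec.reflect (hx : LinRec β n x) : LinRec β n (fun j => x (n - 1 - j)) := by
  intro j hj
  have h := hx (n - 3 - j) (by omega)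
  rw [show n - 3 - j + 2 = n - 1 - j by omega, show n - 3 - j + 1 = n - 1 - (j + 1) by omega,
    show n - 3 - j = n - 1 - (j + 2) by omega] at h
  linear_combination h

theorem LinRec.eq_lucasSeq (hx : LinRec β n x) :
    ∀ j < n, x j = lucasSeq β (j + 1) * x 1 - lucasSeq β j * x 0 := by
  intro j
  induction j using Nat.twoStepInduction with
  | zero => intro _; simp [lucasSeq]
  | one => intro _; simp [lucasSeq]
  | more j ih₀ ih₁ =>
    intro hj
    rw [hx j (by omega), ih₁ (by omega), ih₀ (by omega)]
    simp only [lucasSeq]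
    ring

theorem LinRec.sum_eq (hx : LinRec β n x) :
    ∑ j ∈ range n, x j = (∑ j ∈ range n, lucasSeq β (j + 1)) * x 1
      - (∑ j ∈ range n, lucasSeq β j) * x 0 := by
  rw [sum_mul, sum_mul, ← sum_sub_distrib]
  exact sum_congr rfl fun j hj => hx.eq_lucasSeq j (mem_range.1 hj)

variable [IsDomain R]

theorem LinRec.eq_of_sum_eq (hx : LinRec β n x) (hy : LinRec β n y) (h₀ : x 0 = y 0)
    (hsum : ∑ j ∈ range n, x j = ∑ j ∈ range n, y j)
    (hq : ∑ j ∈ range n, lucasSeq β (j + 1) ≠ 0) : ∀ j < n, x j = y j := by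
  have h₁ : x 1 = y 1 := by
    refine mul_left_cancel₀ hq ?_
    linear_combination hsum + hy.sum_eq - hx.sum_eq + (∑ j ∈ range n, lucasSeq β j) * h₀
  intro j hj
  rw [hx.eq_lucasSeq j hj, hy.eq_lucasSeq j hj, h₀, h₁]

/- If the sum vanished, every solution `z` would satisfy `∑ z = -r z_0` with
`r = ∑_{j<n} U_{j-1}`, and by reflection `∑ z = -r z_{n-1}`. Applied to `x` and to `U` this forces
`x_{n-1} = x_0`, `U_{n-1} = 0` and `r = -1`, so that `∑_{j<n-1} x_j = 0`. -/
theorem LinRec.sum_lucasSeq_ne_zero (hx : LinRec β n x) (hS : ∑ j ∈ range n, x j ≠ 0)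
    (hS' : ∑ j ∈ range (n - 1), x j ≠ 0) : ∑ j ∈ range n, lucasSeq β (j + 1) ≠ 0 := by
  intro hq
  obtain ⟨m, rfl⟩ : ∃ m, n = m + 1 := Nat.exists_eq_succ_of_ne_zero (by rintro rfl; simp at hS)
  set r := ∑ j ∈ range (m + 1), lucasSeq β j
  have hsum : ∀ z, LinRec β (m + 1) z →
      ∑ j ∈ range (m + 1), z j = -r * z 0 ∧ ∑ j ∈ range (m + 1), z j = -r * z m := by
    intro z hz
    refine ⟨by rw [hz.sum_eq, hq]; ring, ?_⟩
    rw [← sum_range_reflect, hz.reflect.sum_eq, hq]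
    simp only [r, Nat.add_sub_cancel, Nat.sub_zero]
    ring
  obtain ⟨hx₀, hxm⟩ := hsum x hx
  have hr : r ≠ 0 := by rintro h₀; rw [hx₀, h₀] at hS; simp at hS
  have hpm : lucasSeq β (m + 1) = 0 := by
    have := (hsum _ (linRec_lucasSeq_succ β (m + 1))).2
    rw [hq] at this
    simpa [hr] using this.symm
  have hr₁ : r = -1 := by
    rw [sum_range_succ] at hq
    simp only [r, sum_range_succ', lucasSeq]
    linear_combination hq - hpm
  apply hS'
  have := sum_range_succ x m
  simp only [Nat.add_sub_cancel]
  linear_combination -this + hxm - x m * hr₁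

end LinRec

theorem sum_range_sub_rev_eq_of_add_eq {M : Type*} [AddCommGroup M] (θ : ℕ → M) {a b d : ℕ}
    (hab : a + b = d + 1) :
    ∑ h ∈ range a, (θ h - θ (d - h)) = ∑ h ∈ range b, (θ h - θ (d - h)) := by
  have hrev : ∀ a b, a + b = d + 1 →
      ∑ h ∈ range a, θ (d - h) = ∑ h ∈ range (d + 1), θ h - ∑ h ∈ range b, θ h := by
    intro a b hab
    rw [← hab, add_comm, sum_range_add, ← sum_range_reflect, add_sub_cancel_left]
    exact sum_congr rfl fun h hh => by rw [mem_range] at hh; congr 1; omega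
  rw [sum_sub_distrib, sum_sub_distrib, hrev a b hab, hrev b a (by omega)]
  abel

theorem sum_range_sub_reflect {M : Type*} [AddCommGroup M] (f : ℕ → M) {d i : ℕ} (hi : i ≤ d) :
    ∑ j ∈ range i, (f (d - 1 - j + 1) - f (d - 1 - j)) = f d - f (d - i) := by
  induction i with
  | zero => simp
  | succ i ih =>
    rw [sum_range_succ, ih (by omega), show d - 1 - i + 1 = d - i by omega,
      show d - 1 - i = d - (i + 1) by omega]
    abel

theorem eq_neg_one_of_swap {R : Type*} [CommRing R] [NoZeroDivisors R] {a b ξ ζ : R}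
    (hab : a ≠ b) (h₁ : b = ξ * a + ζ) (h₂ : a = ξ * b + ζ) : ξ = -1 := by
  have h : (ξ + 1) * (a - b) = 0 := by linear_combination h₂ - h₁
  exact eq_neg_of_add_eq_zero_left ((mul_eq_zero.1 h).resolve_right (sub_ne_zero.2 hab))

namespace IsParamArray

variable {K : Type*} [Field K] {d : ℕ} {θ θs φ ϕ : ℕ → K}

theorem theta_ne (h : IsParamArray K d θ θs φ ϕ) {i j : ℕ} (hi : i ≤ d) (hj : j ≤ d)
    (hij : i ≠ j) : θ i ≠ θ j :=
  (h.2.1 i j hi hj hij).1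

theorem thetaStar_ne (h : IsParamArray K d θ θs φ ϕ) {i j : ℕ} (hi : i ≤ d) (hj : j ≤ d)
    (hij : i ≠ j) : θs i ≠ θs j :=
  (h.2.1 i j hi hj hij).2

theorem exists_linRec (h : IsParamArray K d θ θs φ ϕ) :
    ∃ β, LinRec β d (fun j => θ (j + 1) - θ j) ∧ LinRec β d (fun j => θs (j + 1) - θs j) := by
  set B := (θ 0 - θ 3) / (θ 1 - θ 2)
  have hB : ∀ j, j + 2 < d → θ j - θ (j + 3) = B * (θ (j + 1) - θ (j + 2)) ∧
      θs j - θs (j + 3) = B * (θs (j + 1) - θs (j + 2)) := by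
    intro j hj
    obtain ⟨hs, hθ⟩ := h.2.2.2.2 (j + 2) 2 (by omega) (by omega) le_rfl (by omega)
    rw [Nat.add_sub_cancel, show j + 2 - 1 = j + 1 by omega] at hs hθ
    exact ⟨(div_eq_iff (sub_ne_zero.2 (h.theta_ne (by omega) (by omega) (by omega)))).1 hθ,
      (div_eq_iff (sub_ne_zero.2 (h.thetaStar_ne (by omega) (by omega) (by omega)))).1
        (hs.symm.trans hθ)⟩
  refine ⟨B - 1, fun j hj => ?_, fun j hj => ?_⟩
  · linear_combination -(hB j hj).1
  · linear_combination -(hB j hj).2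

theorem phi_sub_phi_rev (h : IsParamArray K d θ θs φ ϕ) {i : ℕ} (hi : 1 ≤ i) (hid : i ≤ d) :
    φ i - φ (d - i + 1) =
      (θs i - θs 0) * (θ (i - 1) - θ d) - (θs (d - i + 1) - θs 0) * (θ (d - i) - θ d) := by
  rw [h.2.2.1 i hi hid, h.2.2.1 (d - i + 1) (by omega) (by omega), ← sum_div, ← sum_div,
    sum_range_sub_rev_eq_of_add_eq θ (show i + (d - i + 1) = d + 1 by omega), Nat.add_sub_cancel]
  ring

theorem varphi_sub_varphi_rev (h : IsParamArray K d θ θs φ ϕ) {i : ℕ} (hi : 1 ≤ i)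
    (hid : i ≤ d) :
    ϕ i - ϕ (d - i + 1) =
      (θs i - θs 0) * (θ (d - i + 1) - θ 0) - (θs (d - i + 1) - θs 0) * (θ i - θ 0) := by
  rw [h.2.2.2.1 i hi hid, h.2.2.2.1 (d - i + 1) (by omega) (by omega), ← sum_div, ← sum_div,
    sum_range_sub_rev_eq_of_add_eq θ (show i + (d - i + 1) = d + 1 by omega),
    show d - (d - i + 1) + 1 = i by omega]
  ring

theorem phi_one_eq_iff (h : IsParamArray K d θ θs φ ϕ) (hd : 1 ≤ d) :
    (φ 1 = φ d ∧ ϕ 1 = ϕ d) ↔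
      ((θs 1 - θs 0) * (θ d - θ 0) = (θs d - θs 0) * (θ 1 - θ 0) ∧
        θ 1 - θ 0 = θ d - θ (d - 1)) := by
  have hφ := h.phi_sub_phi_rev le_rfl hd
  have hϕ := h.varphi_sub_varphi_rev le_rfl hd
  rw [Nat.sub_add_cancel hd] at hφ hϕ
  rw [Nat.sub_self] at hφ
  have hs : θs d - θs 0 ≠ 0 := sub_ne_zero.2 (h.thetaStar_ne le_rfl (Nat.zero_le d) (by omega))
  constructor
  · rintro ⟨h₁, h₂⟩
    have hE : (θs 1 - θs 0) * (θ d - θ 0) = (θs d - θs 0) * (θ 1 - θ 0) := by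
      linear_combination h₂ - hϕ
    exact ⟨hE, mul_left_cancel₀ hs (by linear_combination hφ - h₁ - hE)⟩
  · rintro ⟨hE, hΔ⟩
    exact ⟨by linear_combination hφ - hE - (θs d - θs 0) * hΔ, by linear_combination hϕ + hE⟩

theorem sum_lucasSeq_ne_zero (h : IsParamArray K d θ θs φ ϕ) (hd : 2 ≤ d) {β : K}
    (hβ : LinRec β d (fun j => θ (j + 1) - θ j)) :
    ∑ j ∈ range d, lucasSeq β (j + 1) ≠ 0 := by
  have hne : ∀ i, 1 ≤ i → i ≤ d → ∑ j ∈ range i, (θ (j + 1) - θ j) ≠ 0 := fun i hi hid => by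
    rw [sum_range_sub]
    exact sub_ne_zero.2 (h.theta_ne hid (Nat.zero_le d) (by omega))
  exact hβ.sum_lucasSeq_ne_zero (hne d (by omega) le_rfl) (hne (d - 1) (by omega) (by omega))

theorem theta_add_theta_rev (h : IsParamArray K d θ θs φ ϕ) (hd : 1 ≤ d)
    (hΔ : θ 1 - θ 0 = θ d - θ (d - 1)) {i : ℕ} (hi : i ≤ d) :
    θ i + θ (d - i) = θ 0 + θ d := by
  obtain rfl | hd₂ := hd.eq_or_lt
  · interval_cases i <;> simp [add_comm]
  obtain ⟨β, hβ, -⟩ := h.exists_linRec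
  have hrev := hβ.eq_of_sum_eq hβ.reflect (by simp [Nat.sub_add_cancel hd, hΔ])
    (sum_range_reflect _ d).symm (h.sum_lucasSeq_ne_zero hd₂ hβ)
  have hsum : θ i - θ 0 = θ d - θ (d - i) := by
    rw [← sum_range_sub, ← sum_range_sub_reflect θ hi]
    exact sum_congr rfl fun j hj => hrev j (by rw [mem_range] at hj; omega)
  linear_combination hsum

theorem mul_thetaStar_sub (h : IsParamArray K d θ θs φ ϕ) (hd : 1 ≤ d)
    (hE : (θs 1 - θs 0) * (θ d - θ 0) = (θs d - θs 0) * (θ 1 - θ 0)) {i : ℕ} (hi : i ≤ d) :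
    (θ 1 - θ 0) * (θs i - θs 0) = (θs 1 - θs 0) * (θ i - θ 0) := by
  obtain rfl | hd₂ := hd.eq_or_lt
  · interval_cases i <;> ring
  obtain ⟨β, hβ, hβs⟩ := h.exists_linRec
  have hprop := (hβs.const_mul (θ 1 - θ 0)).eq_of_sum_eq (hβ.const_mul (θs 1 - θs 0))
    (by ring) (by simp only [← mul_sum, sum_range_sub]; linear_combination -hE)
    (h.sum_lucasSeq_ne_zero hd₂ hβ)
  rw [← sum_range_sub θs i, ← sum_range_sub θ i, mul_sum, mul_sum]
  exact sum_congr rfl fun j hj => hprop j (by rw [mem_range] at hj; omega)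

theorem thetaStar_add_thetaStar_rev (h : IsParamArray K d θ θs φ ϕ) (hd : 1 ≤ d)
    (hE : (θs 1 - θs 0) * (θ d - θ 0) = (θs d - θs 0) * (θ 1 - θ 0))
    (hΔ : θ 1 - θ 0 = θ d - θ (d - 1)) {i : ℕ} (hi : i ≤ d) :
    θs i + θs (d - i) = θs 0 + θs d := by
  refine mul_left_cancel₀ (sub_ne_zero.2 (h.theta_ne hd (Nat.zero_le d) one_ne_zero)) ?_
  linear_combination h.mul_thetaStar_sub hd hE hi + h.mul_thetaStar_sub hd hE (Nat.sub_le d i)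
    - h.mul_thetaStar_sub hd hE le_rfl + (θs 1 - θs 0) * h.theta_add_theta_rev hd hΔ hi

theorem phi_eq_phi_rev (h : IsParamArray K d θ θs φ ϕ) (hd : 1 ≤ d)
    (h₂ : φ 1 = φ d ∧ ϕ 1 = ϕ d) {i : ℕ} (hi : 1 ≤ i) (hid : i ≤ d) :
    φ i = φ (d - i + 1) ∧ ϕ i = ϕ (d - i + 1) := by
  obtain ⟨hE, hΔ⟩ := (h.phi_one_eq_iff hd).1 h₂
  have ha : θ 1 - θ 0 ≠ 0 := sub_ne_zero.2 (h.theta_ne hd (Nat.zero_le d) one_ne_zero)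
  have hC₂ := h.mul_thetaStar_sub hd hE hid
  have hC₂' := h.mul_thetaStar_sub hd hE (show d - i + 1 ≤ d by omega)
  have hC₁ := h.theta_add_theta_rev hd hΔ hid
  have hC₁' := h.theta_add_theta_rev hd hΔ (show i - 1 ≤ d by omega)
  rw [show d - (i - 1) = d - i + 1 by omega] at hC₁'
  constructor <;> rw [← sub_eq_zero] <;> refine mul_left_cancel₀ ha ?_
  · rw [h.phi_sub_phi_rev hi hid]
    linear_combination (θ (i - 1) - θ d) * hC₂ - (θ (d - i) - θ d) * hC₂'
      - (θs 1 - θs 0) * (θ (d - i + 1) - θ 0) * hC₁ + (θs 1 - θs 0) * (θ i - θ 0) * hC₁'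
  · rw [h.varphi_sub_varphi_rev hi hid]
    linear_combination (θ (d - i + 1) - θ 0) * hC₂ - (θ i - θ 0) * hC₂'

theorem thetaStar_sub_mul_inv (h : IsParamArray K d θ θs φ ϕ) (hd : 1 ≤ d)
    (hE : (θs 1 - θs 0) * (θ d - θ 0) = (θs d - θs 0) * (θ 1 - θ 0)) {i : ℕ} (hi : 1 ≤ i)
    (hid : i ≤ d) :
    (θs i - θs 0) * (θ i - θ 0)⁻¹ = (θs 1 - θs 0) * (θ 1 - θ 0)⁻¹ := by
  rw [← div_eq_mul_inv, ← div_eq_mul_inv,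
    div_eq_div_iff (sub_ne_zero.2 (h.theta_ne hid (Nat.zero_le d) (by omega)))
      (sub_ne_zero.2 (h.theta_ne hd (Nat.zero_le d) one_ne_zero))]
  linear_combination h.mul_thetaStar_sub hd hE hid

theorem thetaStar_ratio_const (h : IsParamArray K d θ θs φ ϕ) (hd : 1 ≤ d)
    (h₂ : φ 1 = φ d ∧ ϕ 1 = ϕ d) :
    (∀ i j, 1 ≤ i → i ≤ d → 1 ≤ j → j ≤ d →
      (θs i - θs 0) * (θ i - θ 0)⁻¹ = (θs j - θs 0) * (θ j - θ 0)⁻¹) ∧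
    (∀ i j, 1 ≤ i → i ≤ d → 1 ≤ j → j ≤ d →
      (θs (d - i) - θs d) * (θ i - θ 0)⁻¹ = (θs (d - j) - θs d) * (θ j - θ 0)⁻¹) := by
  obtain ⟨hE, hΔ⟩ := (h.phi_one_eq_iff hd).1 h₂
  have hrev : ∀ i ≤ d, θs (d - i) - θs d = -(θs i - θs 0) := fun i hi => by
    linear_combination h.thetaStar_add_thetaStar_rev hd hE hΔ hi
  refine ⟨fun i j hi hid hj hjd => ?_, fun i j hi hid hj hjd => ?_⟩
  · rw [h.thetaStar_sub_mul_inv hd hE hi hid, h.thetaStar_sub_mul_inv hd hE hj hjd]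
  · rw [hrev i hid, hrev j hjd, neg_mul, neg_mul, h.thetaStar_sub_mul_inv hd hE hi hid,
      h.thetaStar_sub_mul_inv hd hE hj hjd]

theorem phi_one_eq_of_affine (h : IsParamArray K d θ θs φ ϕ) (hd : 1 ≤ d) {ξ ζ ξs ζs : K}
    (hθ : ∀ i ≤ d, θ (d - i) = ξ * θ i + ζ ∧ θs (d - i) = ξs * θs i + ζs)
    (hφ : ∀ i, 1 ≤ i → i ≤ d → φ (d - i + 1) = ξ * ξs * φ i ∧ ϕ (d - i + 1) = ξ * ξs * ϕ i) :
    φ 1 = φ d ∧ ϕ 1 = ϕ d := by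
  have h₀ := hθ 0 (Nat.zero_le d)
  have h_d := hθ d le_rfl
  rw [Nat.sub_zero] at h₀
  rw [Nat.sub_self] at h_d
  have hξ := eq_neg_one_of_swap (h.theta_ne (Nat.zero_le d) le_rfl (by omega)) h₀.1 h_d.1
  have hξs := eq_neg_one_of_swap (h.thetaStar_ne (Nat.zero_le d) le_rfl (by omega)) h₀.2 h_d.2
  have h₁ := hφ 1 le_rfl hd
  rw [Nat.sub_add_cancel hd, hξ, hξs] at h₁
  exact ⟨by linear_combination -h₁.1, by linear_combination -h₁.2⟩

theorem phi_one_eq_of_ratio_const (h : IsParamArray K d θ θs φ ϕ) (hd : 1 ≤ d)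
    (hiv₁ : ∀ i j, 1 ≤ i → i ≤ d → 1 ≤ j → j ≤ d →
      (θs i - θs 0) * (θ i - θ 0)⁻¹ = (θs j - θs 0) * (θ j - θ 0)⁻¹)
    (hiv₂ : ∀ i j, 1 ≤ i → i ≤ d → 1 ≤ j → j ≤ d →
      (θs (d - i) - θs d) * (θ i - θ 0)⁻¹ = (θs (d - j) - θs d) * (θ j - θ 0)⁻¹) :
    φ 1 = φ d ∧ ϕ 1 = ϕ d := by
  have hθ : ∀ i, 1 ≤ i → i ≤ d → θ i - θ 0 ≠ 0 := fun i hi hid =>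
    sub_ne_zero.2 (h.theta_ne hid (Nat.zero_le d) (by omega))
  have cross : ∀ {a b c e : K}, b ≠ 0 → e ≠ 0 → a * b⁻¹ = c * e⁻¹ → a * e = c * b :=
    fun hb he hab => by rwa [← div_eq_mul_inv, ← div_eq_mul_inv, div_eq_div_iff hb he] at hab
  refine (h.phi_one_eq_iff hd).2
    ⟨cross (hθ 1 le_rfl hd) (hθ d hd le_rfl) (hiv₁ 1 d le_rfl hd hd le_rfl), ?_⟩
  obtain rfl | hd₂ := hd.eq_or_lt
  · rfl
  have h₁ := cross (hθ (d - 1) (by omega) (by omega)) (hθ d hd le_rfl)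
    (hiv₁ (d - 1) d (by omega) (by omega) hd le_rfl)
  have h₂ := cross (hθ 1 le_rfl hd) (hθ d hd le_rfl) (hiv₂ 1 d le_rfl hd hd le_rfl)
  rw [Nat.sub_self] at h₂
  refine mul_left_cancel₀ (sub_ne_zero.2 (h.thetaStar_ne le_rfl (Nat.zero_le d) (by omega))) ?_
  linear_combination h₂ - h₁

end IsParamArray

/-- Characterization of when the relative `P^↓⇓` is affine isomorphic to `P`. -/
theorem downDown_affine_iso {K : Type*} [Field K] (d : ℕ) (hd : 1 ≤ d)
    (θ θs φ ϕ : ℕ → K) (hPA : IsParamArray K d θ θs φ ϕ) :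
    -- (i) ↔ (ii)
    ((∃ ξ ζ ξs ζs : K, ξ ≠ 0 ∧ ξs ≠ 0 ∧
        (∀ i ≤ d, θ (d - i) = ξ * θ i + ζ ∧ θs (d - i) = ξs * θs i + ζs) ∧
        (∀ i, 1 ≤ i → i ≤ d →
          φ (d - i + 1) = ξ * ξs * φ i ∧ ϕ (d - i + 1) = ξ * ξs * ϕ i))
      ↔ (φ 1 = φ d ∧ ϕ 1 = ϕ d)) ∧
    -- (ii) ↔ (iii)
    ((φ 1 = φ d ∧ ϕ 1 = ϕ d) ↔
      (∀ i, 1 ≤ i → i ≤ d → φ i = φ (d - i + 1) ∧ ϕ i = ϕ (d - i + 1))) ∧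
    -- (ii) ↔ (iv)
    ((φ 1 = φ d ∧ ϕ 1 = ϕ d) ↔
      ((∀ i j, 1 ≤ i → i ≤ d → 1 ≤ j → j ≤ d →
          (θs i - θs 0) * (θ i - θ 0)⁻¹ = (θs j - θs 0) * (θ j - θ 0)⁻¹) ∧
       (∀ i j, 1 ≤ i → i ≤ d → 1 ≤ j → j ≤ d →
          (θs (d - i) - θs d) * (θ i - θ 0)⁻¹ = (θs (d - j) - θs d) * (θ j - θ 0)⁻¹))) ∧
    -- moreover: θ_i + θ_{d−i} and θ*_i + θ*_{d−i} are independent of i, and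
    -- (i) is satisfied with ξ = −1, ξ* = −1, ζ, ζ* the respective common values
    ((φ 1 = φ d ∧ ϕ 1 = ϕ d) →
      ((∀ i ≤ d, θ i + θ (d - i) = θ 0 + θ d) ∧
       (∀ i ≤ d, θs i + θs (d - i) = θs 0 + θs d) ∧
       (∀ i ≤ d, θ (d - i) = (-1 : K) * θ i + (θ 0 + θ d) ∧
                 θs (d - i) = (-1 : K) * θs i + (θs 0 + θs d)) ∧
       (∀ i, 1 ≤ i → i ≤ d →
         φ (d - i + 1) = (-1 : K) * (-1 : K) * φ i ∧
         ϕ (d - i + 1) = (-1 : K) * (-1 : K) * ϕ i))) := by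
  have hmore : (φ 1 = φ d ∧ ϕ 1 = ϕ d) →
      (∀ i ≤ d, θ i + θ (d - i) = θ 0 + θ d) ∧ (∀ i ≤ d, θs i + θs (d - i) = θs 0 + θs d) ∧
      (∀ i ≤ d, θ (d - i) = (-1 : K) * θ i + (θ 0 + θ d) ∧
        θs (d - i) = (-1 : K) * θs i + (θs 0 + θs d)) ∧
      (∀ i, 1 ≤ i → i ≤ d →
        φ (d - i + 1) = (-1 : K) * (-1 : K) * φ i ∧ ϕ (d - i + 1) = (-1 : K) * (-1 : K) * ϕ i) := by
    intro h₂
    obtain ⟨hE, hΔ⟩ := (hPA.phi_one_eq_iff hd).1 h₂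
    have hθ := fun i (hi : i ≤ d) => hPA.theta_add_theta_rev hd hΔ hi
    have hθs := fun i (hi : i ≤ d) => hPA.thetaStar_add_thetaStar_rev hd hE hΔ hi
    refine ⟨hθ, hθs, fun i hi => ⟨by linear_combination hθ i hi, by linear_combination hθs i hi⟩,
      fun i hi hid => ?_⟩
    obtain ⟨hφ, hϕ⟩ := hPA.phi_eq_phi_rev hd h₂ hi hid
    exact ⟨by linear_combination -hφ, by linear_combination -hϕ⟩
  exact ⟨⟨fun ⟨_, _, _, _, _, _, hθ, hφ⟩ => hPA.phi_one_eq_of_affine hd hθ hφ,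
      fun h₂ => ⟨-1, θ 0 + θ d, -1, θs 0 + θs d, by norm_num, by norm_num, (hmore h₂).2.2⟩⟩,
    ⟨fun h₂ _ => hPA.phi_eq_phi_rev hd h₂,
      fun h₃ => by simpa [Nat.sub_add_cancel hd] using h₃ 1 le_rfl hd⟩,
    ⟨hPA.thetaStar_ratio_const hd, fun ⟨hiv₁, hiv₂⟩ => hPA.phi_one_eq_of_ratio_const hd hiv₁ hiv₂⟩,
    hmore⟩
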